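/- arXiv:2102.10331 — 2 statements merged into one kernel-verified Lean document; each statement's English description precedes it below -/
import Mathlib

section
/- For τ > 0 and any matrix Q, the singular value thresholding operator D_τ(Q) = U (Σ - τI)_+ V^T (where Q = UΣV^T is the SVD and (·)_+ denotes the positive part applied to singular values) is the unique minimizer of the function L ↦ τ‖L‖_* + (1/2)‖L - Q‖_F², where ‖·‖_* is the nuclear norm and ‖·‖_F the Frobenius norm. -/
open Matrix BigOperators

noncomputable def singVal {m n : ℕ} (M : Matrix (Fin m) (Fin n) ℝ) (i : Fin n) : ℝ :=
  Real.sqrt ((show (Mᵀ * M).IsHermitian by simpa using Matrix.isHermitian_conjTranspose_mul_self M).eigenvalues i)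

noncomputable def nuclearNorm {m n : ℕ} (M : Matrix (Fin m) (Fin n) ℝ) : ℝ :=
  ∑ i, singVal M i

noncomputable def frobNorm {m n : ℕ} (M : Matrix (Fin m) (Fin n) ℝ) : ℝ :=
  Real.sqrt (Matrix.trace (Mᵀ * M))

noncomputable def finner {m n : ℕ} (A B : Matrix (Fin m) (Fin n) ℝ) : ℝ :=
  Matrix.trace (Aᵀ * B)

noncomputable def opNorm {m n : ℕ} (M : Matrix (Fin m) (Fin n) ℝ) : ℝ :=
  ‖LinearMap.toContinuousLinearMap (Matrix.toEuclideanLin M)‖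

/-!
Put `d = (σ - τ)₊`. The residual `Q - D = U diag(σ - d) Vᵀ` has `0 ≤ σ - d ≤ τ`, so its operator
norm is at most `τ`, and `tr((Q - D)ᵀ D) = τ ∑ dᵢ = τ ‖D‖_*`. By the duality between operator and
nuclear norm, `tr((Q - D)ᵀ L) ≤ τ ‖L‖_*` for every `L`: `(Q - D) / τ` is a subgradient of `‖·‖_*`
at `D`. Expanding `‖L - Q‖_F² = ‖(L - D) + (D - Q)‖_F²` then gives `f L ≥ f D + ½ ‖L - D‖_F²` for
the objective `f`, which yields both minimality and uniqueness.
-/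

lemma transpose_mul_of_orthonormal_columns {k l p : Type*} [Fintype k] [Fintype p]
    [DecidableEq p] (U : Matrix k p ℝ) (V : Matrix l p ℝ) (d e : p → ℝ) (hU : Uᵀ * U = 1) :
    (U * diagonal d * Vᵀ)ᵀ * (U * diagonal e * Vᵀ) = V * diagonal (d * e) * Vᵀ := by
  calc (U * diagonal d * Vᵀ)ᵀ * (U * diagonal e * Vᵀ)
      = V * (diagonal d * (Uᵀ * U) * diagonal e) * Vᵀ := by
        simp only [transpose_mul, transpose_transpose, diagonal_transpose, Matrix.mul_assoc]
    _ = V * diagonal (d * e) * Vᵀ := by rw [hU, Matrix.mul_one, diagonal_mul_diagonal]; rfl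

section

variable {k l p : Type*} [Fintype k] [Fintype l] [Fintype p] [DecidableEq p]

lemma trace_transpose_mul_comm (X Y : Matrix k l ℝ) :
    trace (Xᵀ * Y) = trace (Yᵀ * X) := by
  rw [← trace_transpose, transpose_mul, transpose_transpose]

lemma dotProduct_le_sqrt_mul_sqrt {ι : Type*} [Fintype ι] (x y : ι → ℝ) :
    x ⬝ᵥ y ≤ √(x ⬝ᵥ x) * √(y ⬝ᵥ y) := by
  simpa [dotProduct, sq] using Real.sum_mul_le_sqrt_mul_sqrt Finset.univ x y

lemma dotProduct_mulVec_self (A : Matrix k l ℝ) (x : l → ℝ) :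
    A *ᵥ x ⬝ᵥ A *ᵥ x = x ⬝ᵥ (Aᵀ * A) *ᵥ x := by
  rw [← mulVec_mulVec, dotProduct_mulVec x, vecMul_transpose]

lemma dotProduct_transpose_mulVec_self_le {V : Matrix l p ℝ} (hV : Vᵀ * V = 1)
    (x : l → ℝ) : Vᵀ *ᵥ x ⬝ᵥ Vᵀ *ᵥ x ≤ x ⬝ᵥ x := by
  set y := Vᵀ *ᵥ x
  have hcross : x ⬝ᵥ V *ᵥ y = y ⬝ᵥ y := by rw [dotProduct_mulVec, ← mulVec_transpose]
  have hproj : V *ᵥ y ⬝ᵥ V *ᵥ y = y ⬝ᵥ y := by rw [dotProduct_mulVec_self, hV, one_mulVec]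
  have hres : 0 ≤ (x - V *ᵥ y) ⬝ᵥ (x - V *ᵥ y) := by
    simpa using dotProduct_self_star_nonneg (x - V *ᵥ y)
  simp only [sub_dotProduct, dotProduct_sub, dotProduct_comm (V *ᵥ y) x, hcross, hproj] at hres
  linarith

lemma dotProduct_mulVec_self_le_of_orthonormal_columns {U : Matrix k p ℝ}
    {V : Matrix l p ℝ} (hU : Uᵀ * U = 1) (hV : Vᵀ * V = 1) {c : p → ℝ} {τ : ℝ}
    (hc : ∀ i, |c i| ≤ τ) (x : l → ℝ) :
    (U * diagonal c * Vᵀ) *ᵥ x ⬝ᵥ (U * diagonal c * Vᵀ) *ᵥ x ≤ τ ^ 2 * (x ⬝ᵥ x) := by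
  set y := Vᵀ *ᵥ x
  have hy : (U * diagonal c * Vᵀ) *ᵥ x ⬝ᵥ (U * diagonal c * Vᵀ) *ᵥ x = ∑ i, c i ^ 2 * y i ^ 2 := by
    rw [dotProduct_mulVec_self, transpose_mul_of_orthonormal_columns U V c c hU, ← mulVec_mulVec,
      ← mulVec_mulVec, dotProduct_mulVec, ← mulVec_transpose]
    simp only [dotProduct, mulVec_diagonal, Pi.mul_apply]
    exact Finset.sum_congr rfl fun i _ => by ring
  calc _ = ∑ i, c i ^ 2 * y i ^ 2 := hy
    _ ≤ ∑ i, τ ^ 2 * y i ^ 2 := Finset.sum_le_sum fun i _ =>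
        mul_le_mul_of_nonneg_right (sq_le_sq.mpr ((hc i).trans (le_abs_self τ))) (sq_nonneg _)
    _ = τ ^ 2 * (y ⬝ᵥ y) := by simp only [dotProduct, ← Finset.mul_sum, sq]
    _ ≤ τ ^ 2 * (x ⬝ᵥ x) := by gcongr; exact dotProduct_transpose_mulVec_self_le hV x

lemma trace_transpose_mul_eq_sum_dotProduct [DecidableEq l] (M L : Matrix k l ℝ)
    {W : Matrix l l ℝ} (hW : W * Wᵀ = 1) :
    trace (Mᵀ * L) = ∑ i, M *ᵥ Wᵀ i ⬝ᵥ L *ᵥ Wᵀ i := by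
  calc trace (Mᵀ * L) = trace ((M * W)ᵀ * (L * W)) := by
        rw [transpose_mul, Matrix.mul_assoc, trace_mul_comm Wᵀ, Matrix.mul_assoc, Matrix.mul_assoc,
          hW, Matrix.mul_one]
    _ = ∑ i, M *ᵥ Wᵀ i ⬝ᵥ L *ᵥ Wᵀ i := by
        simp [trace, mul_apply, mulVec, dotProduct, mul_comm]

end

section

variable {m n r : ℕ}

lemma posSemidef_transpose_mul_self (X : Matrix (Fin m) (Fin n) ℝ) : (Xᵀ * X).PosSemidef := by
  simpa [conjTranspose_eq_transpose_of_trivial] using posSemidef_conjTranspose_mul_self X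

lemma frobNorm_sq (X : Matrix (Fin m) (Fin n) ℝ) : frobNorm X ^ 2 = trace (Xᵀ * X) :=
  Real.sq_sqrt (posSemidef_transpose_mul_self X).trace_nonneg

lemma frobNorm_eq_zero_iff {X : Matrix (Fin m) (Fin n) ℝ} : frobNorm X = 0 ↔ X = 0 := by
  rw [← sq_eq_zero_iff, frobNorm_sq, ← conjTranspose_eq_transpose_of_trivial,
    trace_conjTranspose_mul_self_eq_zero_iff]

lemma frobNorm_add_sq (X Y : Matrix (Fin m) (Fin n) ℝ) :
    frobNorm (X + Y) ^ 2 = frobNorm X ^ 2 + 2 * trace (Xᵀ * Y) + frobNorm Y ^ 2 := by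
  rw [frobNorm_sq, frobNorm_sq, frobNorm_sq, transpose_add, Matrix.add_mul, Matrix.mul_add,
    Matrix.mul_add, trace_add, trace_add, trace_add, trace_transpose_mul_comm Y X]
  ring

noncomputable def svtObjective (τ : ℝ) (Q L : Matrix (Fin m) (Fin n) ℝ) : ℝ :=
  τ * nuclearNorm L + (1/2) * frobNorm (L - Q) ^ 2

lemma svtObjective_add_le_of_subgradient {τ : ℝ} {Q D : Matrix (Fin m) (Fin n) ℝ}
    (hdual : ∀ L : Matrix (Fin m) (Fin n) ℝ, trace ((Q - D)ᵀ * L) ≤ τ * nuclearNorm L)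
    (hD : trace ((Q - D)ᵀ * D) = τ * nuclearNorm D) (L : Matrix (Fin m) (Fin n) ℝ) :
    svtObjective τ Q D + (1/2) * frobNorm (L - D) ^ 2 ≤ svtObjective τ Q L := by
  have hcross : trace ((L - D)ᵀ * (D - Q)) = trace ((Q - D)ᵀ * D) - trace ((Q - D)ᵀ * L) := by
    rw [trace_transpose_mul_comm, ← neg_sub Q D, transpose_neg, Matrix.neg_mul, trace_neg,
      Matrix.mul_sub, trace_sub]
    ring
  have hsplit := frobNorm_add_sq (L - D) (D - Q)
  rw [sub_add_sub_cancel, hcross] at hsplit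
  unfold svtObjective
  linarith [hdual L]

open scoped MatrixOrder in
lemma nuclearNorm_eq_trace_sqrt (X : Matrix (Fin m) (Fin n) ℝ) :
    nuclearNorm X = trace (CFC.sqrt (Xᵀ * X)) := by
  have hX := posSemidef_transpose_mul_self X
  rw [CFC.sqrt_eq_cfc, cfc_nnreal_eq_real _ _ hX.nonneg, hX.1.cfc_eq, IsHermitian.cfc,
    Unitary.conjStarAlgAut_apply, trace_mul_cycle, Unitary.coe_star_mul_self, one_mul,
    trace_diagonal, nuclearNorm]
  refine Finset.sum_congr rfl fun i _ => ?_
  simp [singVal, max_eq_left (hX.eigenvalues_nonneg i)]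

open scoped MatrixOrder in
lemma nuclearNorm_of_orthonormal_columns (U : Matrix (Fin m) (Fin r) ℝ)
    (V : Matrix (Fin n) (Fin r) ℝ) {d : Fin r → ℝ} (hU : Uᵀ * U = 1) (hV : Vᵀ * V = 1)
    (hd : ∀ i, 0 ≤ d i) : nuclearNorm (U * diagonal d * Vᵀ) = ∑ i, d i := by
  set T := V * diagonal d * Vᵀ
  have hT : T.PosSemidef := by
    have : T = (V * diagonal (fun i => √(d i))) * (V * diagonal (fun i => √(d i)))ᴴ := by
      rw [conjTranspose_eq_transpose_of_trivial, transpose_mul, diagonal_transpose,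
        Matrix.mul_assoc, ← Matrix.mul_assoc (diagonal _), diagonal_mul_diagonal,
        ← Matrix.mul_assoc]
      simp only [Real.mul_self_sqrt (hd _), T]
    exact this ▸ posSemidef_self_mul_conjTranspose _
  have hT_sq : T * T = (U * diagonal d * Vᵀ)ᵀ * (U * diagonal d * Vᵀ) := by
    rw [transpose_mul_of_orthonormal_columns U V d d hU]
    simp only [T, Matrix.mul_assoc]
    rw [← Matrix.mul_assoc Vᵀ, hV, Matrix.one_mul, ← Matrix.mul_assoc (diagonal d),
      diagonal_mul_diagonal]
    rfl
  have hsqrt : CFC.sqrt ((U * diagonal d * Vᵀ)ᵀ * (U * diagonal d * Vᵀ)) = T :=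
    (CFC.sqrt_eq_iff _ _ (posSemidef_transpose_mul_self _).nonneg hT.nonneg).mpr hT_sq
  rw [nuclearNorm_eq_trace_sqrt, hsqrt, trace_mul_cycle, hV, Matrix.one_mul, trace_diagonal]

lemma trace_transpose_mul_le_mul_nuclearNorm {M : Matrix (Fin m) (Fin n) ℝ} {τ : ℝ} (hτ : 0 ≤ τ)
    (hM : ∀ x, M *ᵥ x ⬝ᵥ M *ᵥ x ≤ τ ^ 2 * (x ⬝ᵥ x)) (L : Matrix (Fin m) (Fin n) ℝ) :
    trace (Mᵀ * L) ≤ τ * nuclearNorm L := by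
  have hA : (Lᵀ * L).IsHermitian := (posSemidef_transpose_mul_self L).1
  set W : Matrix (Fin n) (Fin n) ℝ := (hA.eigenvectorUnitary : Matrix (Fin n) (Fin n) ℝ)
  -- The columns of `W` are an orthonormal eigenbasis of `Lᵀ L`, so the columns of `L W` have
  -- lengths `singVal L i`, while those of `M W` have length at most `τ`.
  have hW : W * Wᵀ = 1 := by
    simpa [W, star_eq_conjTranspose, conjTranspose_eq_transpose_of_trivial] using
      Unitary.coe_mul_star_self hA.eigenvectorUnitary
  have hunit (i) : Wᵀ i ⬝ᵥ Wᵀ i = 1 := by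
    have := hA.eigenvectorBasis.inner_eq_one i
    rwa [EuclideanSpace.inner_eq_star_dotProduct, star_trivial] at this
  have hLcol (i) : √(L *ᵥ Wᵀ i ⬝ᵥ L *ᵥ Wᵀ i) = singVal L i := by
    have hcol : Wᵀ i = ⇑(hA.eigenvectorBasis i) := rfl
    rw [dotProduct_mulVec_self, hcol, hA.mulVec_eigenvectorBasis, dotProduct_smul, ← hcol, hunit,
      smul_eq_mul, mul_one]
    rfl
  have hMcol (i) : √(M *ᵥ Wᵀ i ⬝ᵥ M *ᵥ Wᵀ i) ≤ τ :=
    (Real.sqrt_le_sqrt ((hM _).trans_eq (by rw [hunit, mul_one]))).trans_eq (Real.sqrt_sq hτ)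
  rw [trace_transpose_mul_eq_sum_dotProduct M L hW, nuclearNorm, Finset.mul_sum]
  refine Finset.sum_le_sum fun i _ => ?_
  calc _ ≤ √(M *ᵥ Wᵀ i ⬝ᵥ M *ᵥ Wᵀ i) * √(L *ᵥ Wᵀ i ⬝ᵥ L *ᵥ Wᵀ i) :=
        dotProduct_le_sqrt_mul_sqrt _ _
    _ ≤ τ * singVal L i := by
        rw [hLcol]; exact mul_le_mul_of_nonneg_right (hMcol i) (Real.sqrt_nonneg _)

lemma abs_sub_max_sub_le {s τ : ℝ} (hs : 0 ≤ s) (hτ : 0 ≤ τ) : |s - max (s - τ) 0| ≤ τ := by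
  rcases le_total s τ with h | h
  · rw [max_eq_right (by linarith), sub_zero, abs_of_nonneg hs]; exact h
  · rw [max_eq_left (by linarith), sub_sub_cancel, abs_of_nonneg hτ]

lemma sub_max_sub_mul_max_sub (s τ : ℝ) :
    (s - max (s - τ) 0) * max (s - τ) 0 = τ * max (s - τ) 0 := by
  rcases le_total s τ with h | h
  · rw [max_eq_right (by linarith), mul_zero, mul_zero]
  · rw [max_eq_left (by linarith), sub_sub_cancel]

end

/-- For τ > 0, the SVT operator D_τ(Q) = U(Σ-τI)₊Vᵀ is the unique
minimizer of L ↦ τ‖L‖_* + (1/2)‖L - Q‖_F². -/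
theorem svt_unique_minimizer {m n r : ℕ} (τ : ℝ) (hτ : 0 < τ)
    (Q : Matrix (Fin m) (Fin n) ℝ)
    (U : Matrix (Fin m) (Fin r) ℝ) (V : Matrix (Fin n) (Fin r) ℝ) (σ : Fin r → ℝ)
    (hU : Uᵀ * U = 1) (hV : Vᵀ * V = 1) (hσ : ∀ i, 0 ≤ σ i)
    (hQ : Q = U * Matrix.diagonal σ * Vᵀ)
    (D : Matrix (Fin m) (Fin n) ℝ)
    (hD : D = U * Matrix.diagonal (fun i => max (σ i - τ) 0) * Vᵀ) :
    (∀ L : Matrix (Fin m) (Fin n) ℝ,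
      τ * nuclearNorm D + (1/2) * (frobNorm (D - Q))^2
        ≤ τ * nuclearNorm L + (1/2) * (frobNorm (L - Q))^2) ∧
    (∀ L : Matrix (Fin m) (Fin n) ℝ,
      τ * nuclearNorm L + (1/2) * (frobNorm (L - Q))^2
        = τ * nuclearNorm D + (1/2) * (frobNorm (D - Q))^2 → L = D) := by
  change (∀ L, svtObjective τ Q D ≤ svtObjective τ Q L) ∧
    ∀ L, svtObjective τ Q L = svtObjective τ Q D → L = D
  set d : Fin r → ℝ := fun i => max (σ i - τ) 0
  have hQD : Q - D = U * diagonal (σ - d) * Vᵀ := by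
    rw [hQ, hD, ← Matrix.sub_mul, ← Matrix.mul_sub, diagonal_sub]; rfl
  have hdual : ∀ L, trace ((Q - D)ᵀ * L) ≤ τ * nuclearNorm L := hQD ▸
    trace_transpose_mul_le_mul_nuclearNorm hτ.le
      (dotProduct_mulVec_self_le_of_orthonormal_columns hU hV fun i =>
        abs_sub_max_sub_le (hσ i) hτ.le)
  have hDnuc : trace ((Q - D)ᵀ * D) = τ * nuclearNorm D := by
    rw [hQD, hD, transpose_mul_of_orthonormal_columns U V _ _ hU, trace_mul_cycle, hV,
      Matrix.one_mul, trace_diagonal,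
      nuclearNorm_of_orthonormal_columns U V hU hV (d := d) fun i => le_max_right _ _,
      Finset.mul_sum]
    exact Finset.sum_congr rfl fun i _ => sub_max_sub_mul_max_sub (σ i) τ
  have hgap := svtObjective_add_le_of_subgradient hdual hDnuc
  refine ⟨fun L => by linarith [hgap L, sq_nonneg (frobNorm (L - D))], fun L hL => ?_⟩
  rw [← sub_eq_zero, ← frobNorm_eq_zero_iff, ← sq_eq_zero_iff]
  linarith [hgap L, sq_nonneg (frobNorm (L - D))]
end

section
/- Let Γ be an m × n real matrix with SVD split Γ = U₀Σ₀V₀ᵀ + U₁Σ₁V₁ᵀ where the diagonal entries of Σ₀ exceed τ > 0 and those of Σ₁ are at most τ. Set L* = U₀(Σ₀ - τI)V₀ᵀ and W = τ⁻¹U₁Σ₁V₁ᵀ. Then Γ - L* = τ(U₀V₀ᵀ + W), with U₀ᵀW = 0, WV₀ = 0, and ‖W‖₂ ≤ 1. -/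
open Matrix BigOperators

/-! The decomposition is linear algebra with the two SVD blocks: subtracting `τ` from `Σ₀`
removes exactly `τ U₀V₀ᵀ`, and `W` is built from the second block, which is orthogonal to the
first. For the norm bound, the spectral norm is submultiplicative, a matrix with orthonormal
columns has norm at most `1`, and `‖Σ₁‖₂ = maxⱼ σ₁ⱼ ≤ τ`. -/

namespace Matrix

section L2OpNorm

open scoped Matrix.Norms.L2Operator

variable {𝕜 : Type*} [RCLike 𝕜] {l m n : Type*} [Fintype l] [Fintype m] [Fintype n]

lemma l2_opNorm_diagonal_le [DecidableEq n] {v : n → 𝕜} {c : ℝ} (hc : 0 ≤ c)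
    (hv : ∀ i, ‖v i‖ ≤ c) : ‖diagonal v‖ ≤ c := by
  rw [l2_opNorm_diagonal]
  exact (pi_norm_le_iff_of_nonneg hc).mpr hv

lemma l2_opNorm_le_one_of_conjTranspose_mul_self_eq_one [DecidableEq n] {A : Matrix m n 𝕜}
    (hA : Aᴴ * A = 1) : ‖A‖ ≤ 1 := by
  have h1 : ‖(1 : Matrix n n 𝕜)‖ ≤ 1 := by
    rw [← diagonal_one]
    exact l2_opNorm_diagonal_le zero_le_one fun _ => norm_one.le
  rw [← hA, l2_opNorm_conjTranspose_mul_self] at h1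
  nlinarith [norm_nonneg A]

lemma l2_opNorm_mul_diagonal_mul_conjTranspose_le [DecidableEq l] [DecidableEq n]
    {U : Matrix m l 𝕜} {V : Matrix n l 𝕜} {σ : l → 𝕜} {c : ℝ}
    (hU : Uᴴ * U = 1) (hV : Vᴴ * V = 1) (hc : 0 ≤ c) (hσ : ∀ i, ‖σ i‖ ≤ c) :
    ‖U * diagonal σ * Vᴴ‖ ≤ c :=
  calc ‖U * diagonal σ * Vᴴ‖ ≤ ‖U‖ * ‖diagonal σ‖ * ‖Vᴴ‖ := by
        grw [l2_opNorm_mul, l2_opNorm_mul]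
    _ ≤ 1 * c * 1 := by
        rw [l2_opNorm_conjTranspose]
        gcongr
        · exact l2_opNorm_le_one_of_conjTranspose_mul_self_eq_one hU
        · exact l2_opNorm_diagonal_le hc hσ
        · exact l2_opNorm_le_one_of_conjTranspose_mul_self_eq_one hV
    _ = c := by ring

end L2OpNorm

lemma mul_diagonal_sub_const_mul {R : Type*} [CommRing R] {l m n : Type*} [Fintype l]
    [DecidableEq l] (U : Matrix m l R) (σ : l → R) (c : R) (V : Matrix l n R) :
    U * diagonal (fun j => σ j - c) * V = U * diagonal σ * V - c • (U * V) := by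
  have hdiag : diagonal (fun j => σ j - c) = diagonal σ - c • 1 := by
    rw [smul_one_eq_diagonal, diagonal_sub]
  rw [hdiag, Matrix.mul_sub, Matrix.sub_mul, Matrix.mul_smul, Matrix.mul_one, Matrix.smul_mul]

end Matrix

open scoped Matrix.Norms.L2Operator in
lemma opNorm_eq_l2_opNorm {m n : ℕ} (M : Matrix (Fin m) (Fin n) ℝ) : opNorm M = ‖M‖ := rfl

theorem svt_optimality_decomposition_general {m n r0 r1 : ℕ} (τ : ℝ) (hτ : 0 < τ)
    (Γ : Matrix (Fin m) (Fin n) ℝ)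
    (U0 : Matrix (Fin m) (Fin r0) ℝ) (V0 : Matrix (Fin n) (Fin r0) ℝ) (σ0 : Fin r0 → ℝ)
    (U1 : Matrix (Fin m) (Fin r1) ℝ) (V1 : Matrix (Fin n) (Fin r1) ℝ) (σ1 : Fin r1 → ℝ)
    (hU1 : U1ᵀ * U1 = 1) (hV1 : V1ᵀ * V1 = 1)
    (hU01 : U0ᵀ * U1 = 0) (hV01 : V0ᵀ * V1 = 0)
    (hσ1 : ∀ j, 0 ≤ σ1 j ∧ σ1 j ≤ τ)
    (hΓ : Γ = U0 * Matrix.diagonal σ0 * V0ᵀ + U1 * Matrix.diagonal σ1 * V1ᵀ)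
    (Lstar W : Matrix (Fin m) (Fin n) ℝ)
    (hL : Lstar = U0 * Matrix.diagonal (fun j => σ0 j - τ) * V0ᵀ)
    (hWdef : W = τ⁻¹ • (U1 * Matrix.diagonal σ1 * V1ᵀ)) :
    Γ - Lstar = τ • (U0 * V0ᵀ + W)
      ∧ U0ᵀ * W = 0 ∧ W * V0 = 0 ∧ opNorm W ≤ 1 := by
  have hτW : τ • W = U1 * diagonal σ1 * V1ᵀ := by
    rw [hWdef, smul_smul, mul_inv_cancel₀ hτ.ne', one_smul]
  refine ⟨?_, ?_, ?_, ?_⟩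
  · rw [hΓ, hL, mul_diagonal_sub_const_mul, smul_add, hτW]
    abel
  · rw [hWdef, Matrix.mul_smul, ← Matrix.mul_assoc, ← Matrix.mul_assoc, hU01,
      Matrix.zero_mul, Matrix.zero_mul, smul_zero]
  · have hV10 : V1ᵀ * V0 = 0 := by simpa using congrArg transpose hV01
    rw [hWdef, Matrix.smul_mul, Matrix.mul_assoc, hV10, Matrix.mul_zero, smul_zero]
  · have hσ1_norm : ∀ j, ‖σ1 j‖ ≤ τ := fun j => by
      rw [Real.norm_of_nonneg (hσ1 j).1]
      exact (hσ1 j).2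
    have hblock := l2_opNorm_mul_diagonal_mul_conjTranspose_le
      (by simpa using hU1) (by simpa using hV1) hτ.le hσ1_norm
    rw [conjTranspose_eq_transpose_of_trivial] at hblock
    open scoped Matrix.Norms.L2Operator in
    calc opNorm W = τ⁻¹ * ‖U1 * diagonal σ1 * V1ᵀ‖ := by
          rw [opNorm_eq_l2_opNorm, hWdef, norm_smul, Real.norm_of_nonneg (inv_nonneg.mpr hτ.le)]
      _ ≤ τ⁻¹ * τ := by gcongr
      _ = 1 := inv_mul_cancel₀ hτ.ne'

/-- With L* = U₀(Σ₀-τI)V₀ᵀ and W = τ⁻¹U₁Σ₁V₁ᵀ we have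
Γ - L* = τ(U₀V₀ᵀ + W), U₀ᵀW = 0, WV₀ = 0, ‖W‖₂ ≤ 1. -/
theorem svt_optimality_decomposition {m n r0 r1 : ℕ} (τ : ℝ) (hτ : 0 < τ)
    (Γ : Matrix (Fin m) (Fin n) ℝ)
    (U0 : Matrix (Fin m) (Fin r0) ℝ) (V0 : Matrix (Fin n) (Fin r0) ℝ) (σ0 : Fin r0 → ℝ)
    (U1 : Matrix (Fin m) (Fin r1) ℝ) (V1 : Matrix (Fin n) (Fin r1) ℝ) (σ1 : Fin r1 → ℝ)
    (hU0 : U0ᵀ * U0 = 1) (hV0 : V0ᵀ * V0 = 1)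
    (hU1 : U1ᵀ * U1 = 1) (hV1 : V1ᵀ * V1 = 1)
    (hU01 : U0ᵀ * U1 = 0) (hV01 : V0ᵀ * V1 = 0)
    (hσ0 : ∀ j, τ < σ0 j) (hσ1 : ∀ j, 0 ≤ σ1 j ∧ σ1 j ≤ τ)
    (hΓ : Γ = U0 * Matrix.diagonal σ0 * V0ᵀ + U1 * Matrix.diagonal σ1 * V1ᵀ)
    (Lstar W : Matrix (Fin m) (Fin n) ℝ)
    (hL : Lstar = U0 * Matrix.diagonal (fun j => σ0 j - τ) * V0ᵀ)
    (hWdef : W = τ⁻¹ • (U1 * Matrix.diagonal σ1 * V1ᵀ)) :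
    Γ - Lstar = τ • (U0 * V0ᵀ + W)
      ∧ U0ᵀ * W = 0 ∧ W * V0 = 0 ∧ opNorm W ≤ 1 :=
  svt_optimality_decomposition_general τ hτ Γ U0 V0 σ0 U1 V1 σ1 hU1 hV1 hU01 hV01 hσ1 hΓ Lstar W hL
    hWdef
end
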